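/- If φ : Γ → Γ has no periodic point, then there exists μ > 0 such that for every x ∈ X^Γ there exists y ∈ X^Γ with (x, y) ∈ S(X^Γ, σ_φ) and limsup_{t→∞} D(σ_φ^t(x), σ_φ^t(y)) = μ. -/

import Mathlib

open Filter Topology

open scoped Classical in
/-- The metric `D` on `X^Γ`, via a fixed bijection `e : ℕ ≃ Γ`. -/
noncomputable def gsD {X Γ : Type*} (e : ℕ ≃ Γ) (x y : Γ → X) : ℝ :=
  ∑' n : ℕ, (if x (e n) = y (e n) then (0 : ℝ) else 1) / 2 ^ (n + 1)

/-- The generalized shift `σ_φ`. -/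
def gshift {X Γ : Type*} (φ : Γ → Γ) : (Γ → X) → (Γ → X) := fun x => x ∘ φ

/-- `(x, y)` is a scrambled pair of `f` with respect to the distance function `d`. -/
def scrambledPair {Z : Type*} (d : Z → Z → ℝ) (f : Z → Z) (x y : Z) : Prop :=
  liminf (fun n : ℕ => d (f^[n] x) (f^[n] y)) atTop = 0 ∧
    0 < limsup (fun n : ℕ => d (f^[n] x) (f^[n] y)) atTop

/-!
Without periodic points every orbit `t ↦ φ^[t] a` is injective, so for finitely many
coordinates `e 0, …, e (j-1)` and a finite forbidden set `B`, at all large times `t` the points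
`φ^[t] (e n)` avoid `B`. Choosing inductively times `T₀ < T₁ < ⋯` and sizes `j₀ < j₁ < ⋯` whose
slices `{φ^[Tₘ] (e n) | n < jₘ}` are pairwise disjoint, let `S` be the union of the even-indexed
slices and let `y` differ from `x` exactly on `S`. Then `D(σ^t x, σ^t y)` only sees which of the
`φ^[t] (e n)` lie in `S`: it is at least `1 - 2⁻ᵏ` at the even times `T₂ₘ` and at most `2⁻ᵏ` at
the odd ones, so its liminf is `0` and its limsup is `μ = 1`.
-/

open Function

section HalfPowerSums

lemma summable_half_pow_succ : Summable fun n : ℕ => (1 / 2 : ℝ) ^ (n + 1) :=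
  (summable_nat_add_iff 1).2 (summable_geometric_of_lt_one (by norm_num) (by norm_num))

lemma tsum_half_pow_succ : ∑' n : ℕ, (1 / 2 : ℝ) ^ (n + 1) = 1 := by
  simp only [pow_succ', tsum_mul_left, tsum_geometric_two]
  norm_num

lemma sum_range_half_pow_succ (k : ℕ) :
    ∑ n ∈ Finset.range k, (1 / 2 : ℝ) ^ (n + 1) = 1 - (1 / 2) ^ k := by
  induction k with
  | zero => simp
  | succ k ih => rw [Finset.sum_range_succ, ih]; ring

variable {f : ℕ → ℝ}

lemma summable_of_le_half_pow_succ (h0 : ∀ n, 0 ≤ f n) (h1 : ∀ n, f n ≤ (1 / 2) ^ (n + 1)) :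
    Summable f :=
  summable_half_pow_succ.of_nonneg_of_le h0 h1

lemma tsum_le_half_pow_of_eq_zero (h0 : ∀ n, 0 ≤ f n) (h1 : ∀ n, f n ≤ (1 / 2) ^ (n + 1))
    (k : ℕ) (hk : ∀ n < k, f n = 0) : ∑' n, f n ≤ (1 / 2) ^ k := by
  have hf := summable_of_le_half_pow_succ h0 h1
  rw [← hf.sum_add_tsum_nat_add k, Finset.sum_eq_zero fun n hn => hk n (Finset.mem_range.1 hn),
    zero_add]
  calc ∑' n, f (n + k) ≤ ∑' n : ℕ, (1 / 2) ^ k * (1 / 2) ^ (n + 1) :=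
        ((summable_nat_add_iff k).2 hf).tsum_le_tsum
          (fun n => (h1 (n + k)).trans_eq (by ring)) (summable_half_pow_succ.mul_left _)
    _ = (1 / 2) ^ k := by rw [tsum_mul_left, tsum_half_pow_succ, mul_one]

lemma one_sub_half_pow_le_tsum (h0 : ∀ n, 0 ≤ f n) (h1 : ∀ n, f n ≤ (1 / 2) ^ (n + 1))
    (k : ℕ) (hk : ∀ n < k, f n = (1 / 2) ^ (n + 1)) : 1 - (1 / 2) ^ k ≤ ∑' n, f n :=
  calc 1 - (1 / 2 : ℝ) ^ k = ∑ n ∈ Finset.range k, f n := by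
        rw [← sum_range_half_pow_succ]
        exact Finset.sum_congr rfl fun n hn => (hk n (Finset.mem_range.1 hn)).symm
    _ ≤ ∑' n, f n := (summable_of_le_half_pow_succ h0 h1).sum_le_tsum _ fun n _ => h0 n

end HalfPowerSums

section Metric

variable {X Γ : Type*} (e : ℕ ≃ Γ) (x y : Γ → X)

open scoped Classical in
lemma gsD_term_nonneg (n : ℕ) :
    0 ≤ (if x (e n) = y (e n) then (0 : ℝ) else 1) / 2 ^ (n + 1) := by
  split_ifs <;> positivity

open scoped Classical in
lemma gsD_term_le (n : ℕ) :
    (if x (e n) = y (e n) then (0 : ℝ) else 1) / 2 ^ (n + 1) ≤ (1 / 2) ^ (n + 1) := by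
  rw [one_div_pow]
  split_ifs <;> simp

lemma gsD_le_half_pow {k : ℕ} (h : ∀ n < k, x (e n) = y (e n)) : gsD e x y ≤ (1 / 2) ^ k :=
  tsum_le_half_pow_of_eq_zero (gsD_term_nonneg e x y) (gsD_term_le e x y) k fun n hn => by
    simp [h n hn]

lemma one_sub_half_pow_le_gsD {k : ℕ} (h : ∀ n < k, x (e n) ≠ y (e n)) :
    1 - (1 / 2) ^ k ≤ gsD e x y :=
  one_sub_half_pow_le_tsum (gsD_term_nonneg e x y) (gsD_term_le e x y) k fun n hn => by
    simp [h n hn]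

lemma gsD_nonneg : 0 ≤ gsD e x y := by
  simpa using one_sub_half_pow_le_gsD e x y (k := 0) (by simp)

lemma gsD_le_one : gsD e x y ≤ 1 := by
  simpa using gsD_le_half_pow e x y (k := 0) (by simp)

end Metric

lemma gshift_iterate {X Γ : Type*} (φ : Γ → Γ) (t : ℕ) (x : Γ → X) :
    (gshift φ)^[t] x = x ∘ φ^[t] := by
  induction t generalizing x with
  | zero => rfl
  | succ t ih => rw [iterate_succ_apply, ih, iterate_succ']; rfl

lemma injective_iterate_apply_of_periodicPts_eq_empty {α : Type*} {f : α → α}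
    (h : periodicPts f = ∅) (x : α) : Injective fun n => f^[n] x := by
  refine Injective.of_lt_imp_ne fun m n hmn hfmn => ?_
  have : IsPeriodicPt f (n - m) (f^[m] x) := by
    rw [IsPeriodicPt, IsFixedPt, ← iterate_add_apply, Nat.sub_add_cancel hmn.le, hfmn]
  exact (Set.eq_empty_iff_forall_notMem.1 h) _ ⟨n - m, Nat.sub_pos_of_lt hmn, this⟩

section Limits

variable {ι β : Type*} [ConditionallyCompleteLinearOrder β] [TopologicalSpace β]
  [OrderTopology β] {l : Filter ι} [l.NeBot] {u : ι → β} {c : ℕ → β} {a : β}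

lemma liminf_eq_of_frequently_le (ha : ∀ i, a ≤ u i) (hu : IsBoundedUnder (· ≤ ·) l u)
    (hc : Tendsto c atTop (𝓝 a)) (h : ∀ k, ∃ᶠ i in l, u i ≤ c k) : liminf u l = a :=
  le_antisymm
    (ge_of_tendsto hc (Eventually.of_forall fun k =>
      liminf_le_of_frequently_le (h k) (isBoundedUnder_of ⟨a, ha⟩)))
    (le_liminf_of_le hu.isCoboundedUnder_ge (Eventually.of_forall ha))

lemma limsup_eq_of_frequently_ge (ha : ∀ i, u i ≤ a) (hu : IsBoundedUnder (· ≥ ·) l u)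
    (hc : Tendsto c atTop (𝓝 a)) (h : ∀ k, ∃ᶠ i in l, c k ≤ u i) : limsup u l = a :=
  le_antisymm
    (limsup_le_of_le hu.isCoboundedUnder_le (Eventually.of_forall ha))
    (le_of_tendsto hc (Eventually.of_forall fun k =>
      le_limsup_of_frequently_le (h k) (isBoundedUnder_of ⟨a, ha⟩)))

end Limits

section OrbitSlices

variable {Γ : Type*} (o : ℕ → ℕ → Γ)

def orbitSlice (j t : ℕ) : Set Γ := (o · t) '' Set.Iio j

lemma mem_orbitSlice {j t n : ℕ} (hn : n < j) : o n t ∈ orbitSlice o j t := ⟨n, hn, rfl⟩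

variable {o}

lemma exists_seq_pairwise_disjoint_orbitSlice (ho : ∀ n, Tendsto (o n) atTop cofinite) :
    ∃ j t : ℕ → ℕ, StrictMono j ∧ StrictMono t ∧
      Pairwise (Disjoint on fun m => orbitSlice o (j m) (t m)) := by
  obtain ⟨p, -, hp⟩ := exists_seq_of_forall_finset_exists (α := ℕ × ℕ) (fun _ => True)
    (fun p q => p.1 < q.1 ∧ p.2 < q.2 ∧ Disjoint (orbitSlice o p.1 p.2) (orbitSlice o q.1 q.2))
    fun s _ => by
      set B := ⋃ q ∈ s, orbitSlice o q.1 q.2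
      have hB : B.Finite := s.finite_toSet.biUnion fun q _ => (Set.finite_Iio q.1).image _
      set j := s.sup Prod.fst + 1
      obtain ⟨t, hts, htB⟩ : ∃ t, (∀ q ∈ s, q.2 < t) ∧ ∀ n < j, o n t ∉ B :=
        ((eventually_all_finset s).2 fun q _ => eventually_gt_atTop q.2).and
          ((eventually_all_finite (Set.finite_Iio j)).2 fun n _ =>
            ho n hB.compl_mem_cofinite) |>.exists
      refine ⟨(j, t), trivial, fun q hq => ⟨Nat.lt_succ_of_le (Finset.le_sup hq), hts q hq, ?_⟩⟩
      rintro C hCq hCt c hc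
      obtain ⟨n, hn, rfl⟩ := hCt hc
      exact htB n hn (Set.mem_biUnion hq (hCq hc))
  refine ⟨fun m => (p m).1, fun m => (p m).2,
    strictMono_nat_of_lt_succ fun m => (hp m (m + 1) m.lt_succ_self).1,
    strictMono_nat_of_lt_succ fun m => (hp m (m + 1) m.lt_succ_self).2.1, fun m n hmn => ?_⟩
  rcases hmn.lt_or_gt with h | h
  exacts [(hp m n h).2.2, (hp n m h).2.2.symm]

lemma exists_set_frequently_forall_mem_and_frequently_forall_notMem
    (ho : ∀ n, Tendsto (o n) atTop cofinite) :
    ∃ S : Set Γ, ∀ k, (∃ᶠ t in atTop, ∀ n < k, o n t ∈ S) ∧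
      ∃ᶠ t in atTop, ∀ n < k, o n t ∉ S := by
  obtain ⟨j, t, hj, ht, hdisj⟩ := exists_seq_pairwise_disjoint_orbitSlice ho
  have hfreq : ∀ (r : ℕ) {P : ℕ → Prop}, (∀ᶠ m in atTop, P (t (2 * m + r))) →
      ∃ᶠ s in atTop, P s := fun r _ h =>
    have hr : StrictMono fun m => 2 * m + r := fun a b hab => by dsimp only; omega
    (ht.comp hr).tendsto_atTop.frequently h.frequently
  refine ⟨⋃ m, orbitSlice o (j (2 * m)) (t (2 * m)), fun k => ⟨?_, ?_⟩⟩
  · refine hfreq 0 ((eventually_ge_atTop k).mono fun m hm n hn => Set.mem_iUnion.2 ⟨m, ?_⟩)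
    exact mem_orbitSlice o (by have := hj.le_apply (x := 2 * m); omega)
  · refine hfreq 1 ((eventually_ge_atTop k).mono fun m hm n hn hS => ?_)
    obtain ⟨m', hm'⟩ := Set.mem_iUnion.1 hS
    exact Set.disjoint_left.1 (hdisj (by omega : 2 * m + 1 ≠ 2 * m'))
      (mem_orbitSlice o (by have := hj.le_apply (x := 2 * m + 1); omega)) hm'

end OrbitSlices

lemma exists_ne_iff_mem {Γ X : Type*} [Nontrivial X] (x : Γ → X) (S : Set Γ) :
    ∃ y : Γ → X, ∀ c, x c ≠ y c ↔ c ∈ S := by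
  classical
  choose g hg using fun v : X => exists_ne v
  refine ⟨fun c => if c ∈ S then g (x c) else x c, fun c => ?_⟩
  by_cases hc : c ∈ S <;> simp [hc, (hg _).symm]

theorem stmt6_general {X Γ : Type*} [Nontrivial X] (e : ℕ ≃ Γ) (φ : Γ → Γ)
    (hφ : ¬ ∃ a : Γ, ∃ n : ℕ, 1 ≤ n ∧ φ^[n] a = a) :
    ∃ μ > (0 : ℝ), ∀ x : Γ → X, ∃ y : Γ → X,
      scrambledPair (gsD e) (gshift φ) x y ∧
        limsup (fun t : ℕ => gsD e ((gshift φ)^[t] x) ((gshift φ)^[t] y)) atTop = μ := by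
  have hper : periodicPts φ = ∅ :=
    Set.eq_empty_of_forall_notMem fun a ⟨n, hn, ha⟩ => hφ ⟨a, n, hn, ha⟩
  obtain ⟨S, hS⟩ := exists_set_frequently_forall_mem_and_frequently_forall_notMem
    (o := fun n t => φ^[t] (e n)) fun n => Nat.cofinite_eq_atTop ▸
      (injective_iterate_apply_of_periodicPts_eq_empty hper (e n)).tendsto_cofinite
  refine ⟨1, one_pos, fun x => ?_⟩
  obtain ⟨y, hy⟩ := exists_ne_iff_mem x S
  set d : ℕ → ℝ := fun t => gsD e ((gshift φ)^[t] x) ((gshift φ)^[t] y)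
  have hd_ge : ∀ k t, (∀ n < k, φ^[t] (e n) ∈ S) → 1 - (1 / 2) ^ k ≤ d t := fun k t h =>
    one_sub_half_pow_le_gsD e _ _ fun n hn => by
      simpa [gshift_iterate] using (hy _).2 (h n hn)
  have hd_le : ∀ k t, (∀ n < k, φ^[t] (e n) ∉ S) → d t ≤ (1 / 2) ^ k := fun k t h =>
    gsD_le_half_pow e _ _ fun n hn => by
      simpa [gshift_iterate] using not_imp_comm.1 (hy _).1 (h n hn)
  have hhalf : Tendsto (fun k : ℕ => (1 / 2 : ℝ) ^ k) atTop (𝓝 0) :=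
    tendsto_pow_atTop_nhds_zero_of_lt_one (by norm_num) (by norm_num)
  have hd_nonneg : ∀ t, 0 ≤ d t := fun t => gsD_nonneg e _ _
  have hd_le_one : ∀ t, d t ≤ 1 := fun t => gsD_le_one e _ _
  have hlimsup : limsup d atTop = 1 :=
    limsup_eq_of_frequently_ge hd_le_one (isBoundedUnder_of ⟨0, hd_nonneg⟩)
      (by simpa using tendsto_const_nhds.sub hhalf) fun k => (hS k).1.mono (hd_ge k)
  have hliminf : liminf d atTop = 0 :=
    liminf_eq_of_frequently_le hd_nonneg (isBoundedUnder_of ⟨1, hd_le_one⟩)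
      hhalf fun k => (hS k).2.mono (hd_le k)
  exact ⟨y, ⟨hliminf, hlimsup ▸ one_pos⟩, hlimsup⟩

/-- If `φ : Γ → Γ` has no periodic point, then there exists `μ > 0` such
that for every `x ∈ X^Γ` there exists `y ∈ X^Γ` with `(x, y)` a scrambled pair of
`(X^Γ, σ_φ)` and `limsup D(σ_φ^t x, σ_φ^t y) = μ`. -/
theorem stmt6 {X Γ : Type*} [TopologicalSpace X] [DiscreteTopology X] [Finite X]
    [Nontrivial X] [Countable Γ] [Infinite Γ] (e : ℕ ≃ Γ) (φ : Γ → Γ)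
    (hφ : ¬ ∃ a : Γ, ∃ n : ℕ, 1 ≤ n ∧ φ^[n] a = a) :
    ∃ μ > (0 : ℝ), ∀ x : Γ → X, ∃ y : Γ → X,
      scrambledPair (gsD e) (gshift φ) x y ∧
        limsup (fun t : ℕ => gsD e ((gshift φ)^[t] x) ((gshift φ)^[t] y)) atTop = μ :=
  stmt6_general e φ hφ
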